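/- arXiv:1512.07922 — 2 statements merged into one kernel-verified Lean document; each statement's English description precedes it below -/
import Mathlib

section
/- Let A be a group and C a subgroup of A. Let G = A *_C A be the amalgamated free product of two copies of A along the inclusion of C into each copy, with canonical injective homomorphisms φ_1, φ_2 : A → G satisfying φ_1|_C = φ_2|_C. Let σ : G → G be the automorphism determined by the universal property from σ ∘ φ_1 = φ_2 and σ ∘ φ_2 = φ_1 (the involution exchanging the two copies of A and fixing C). Then the fixed subgroup of σ is exactly the canonical image of C: for g ∈ G, σ(g) = g if and only if g ∈ φ_1(C). -/
/-!
Since `IsAmalgamatedProduct` is a universal property, `G` is isomorphic to Mathlib's concrete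
amalgamated product `PushoutI` of the constant family `Bool → (C →* A)`, and `σ` becomes the
map swapping the index of every letter. Choosing the same transversal of `C` in both copies of
`A`, swapping the indices of a normal word gives again a normal word, so by uniqueness of normal
forms a fixed element has a normal word that is fixed by swapping its letters' indices. Adjacent
letters carry different indices, and swapping moves every index, so that word is empty and the
element lies in `C`.
-/

universe u

/-- `IsAmalgamatedProduct f g φ₁ φ₂` says that `(G, φ₁, φ₂)` is a pushout of `f : C →* A`
and `g : C →* B` in the category of groups, i.e. that `G` is the amalgamated free product
`A *_C B` with its canonical homomorphisms `φ₁ : A → G`, `φ₂ : B → G`. -/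
structure IsAmalgamatedProduct {C A B G : Type*} [Group C] [Group A] [Group B] [Group G]
    (f : C →* A) (g : C →* B) (φ₁ : A →* G) (φ₂ : B →* G) : Prop where
  comm : φ₁.comp f = φ₂.comp g
  lift_unique : ∀ {H : Type u} [Group H] (ψ₁ : A →* H) (ψ₂ : B →* H),
    ψ₁.comp f = ψ₂.comp g → ∃! h : G →* H, h.comp φ₁ = ψ₁ ∧ h.comp φ₂ = ψ₂

/-- `IsFreeProduct ι₁ ι₂` says that `(P, ι₁, ι₂)` is a coproduct of `A` and `K` in the
category of groups, i.e. that `P` is the free product `A * K` with its canonical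
homomorphisms. -/
structure IsFreeProduct {A K P : Type*} [Group A] [Group K] [Group P]
    (ι₁ : A →* P) (ι₂ : K →* P) : Prop where
  lift_unique : ∀ {H : Type u} [Group H] (ψ₁ : A →* H) (ψ₂ : K →* H),
    ∃! h : P →* H, h.comp ι₁ = ψ₁ ∧ h.comp ι₂ = ψ₂

open Function

namespace Monoid.CoprodI.Word

variable {ι M : Type*} [Monoid M]

def relabel {e : ι → ι} (he : Injective e) (w : Word fun _ : ι => M) : Word fun _ : ι => M where
  toList := w.toList.map fun l => ⟨e l.1, l.2⟩
  ne_one := by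
    simp only [List.mem_map]
    rintro _ ⟨l, hl, rfl⟩
    exact w.ne_one l hl
  chain_ne := (List.isChain_map _).2 <| w.chain_ne.imp fun _ _ h => he.ne h

theorem eq_empty_of_relabel_eq_self {e : ι → ι} (he : Injective e) (hfix : ∀ i, e i ≠ i)
    {w : Word fun _ : ι => M} (hw : w.relabel he = w) : w = empty := by
  obtain ⟨_ | ⟨l, t⟩, _, _⟩ := w
  · rfl
  · have := congrArg (fun w : Word _ => (w.toList.head?.map Sigma.fst)) hw
    exact absurd (by simpa [relabel] using this) (hfix l.1)

end Monoid.CoprodI.Word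

namespace Monoid.PushoutI

variable {ι A H : Type*} [Group A] [Group H] {φ : H →* A}

def relabel (e : ι → ι) : PushoutI (fun _ : ι => φ) →* PushoutI (fun _ : ι => φ) :=
  lift (fun i => of (φ := fun _ : ι => φ) (e i)) (base _) fun i => of_comp_eq_base (e i)

@[simp]
theorem relabel_of (e : ι → ι) (i : ι) (a : A) :
    relabel e (of (φ := fun _ => φ) i a) = of (e i) a := by
  simp [relabel]

@[simp]
theorem relabel_base (e : ι → ι) (h : H) : relabel e (base (fun _ : ι => φ) h) = base _ h := by
  simp [relabel]

theorem relabel_ofCoprodI_prod {e : ι → ι} (he : Injective e) (w : CoprodI.Word fun _ : ι => A) :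
    relabel (φ := φ) e (ofCoprodI w.prod) = ofCoprodI (w.relabel he).prod := by
  simp only [CoprodI.Word.prod, CoprodI.Word.relabel, map_list_prod, List.map_map]
  congr 1

namespace NormalWord

def relabel {d : Transversal fun _ : ι => φ} {e : ι → ι} (he : Injective e)
    (hd : ∀ i, d.set (e i) = d.set i) (w : NormalWord d) : NormalWord d where
  toWord := w.toWord.relabel he
  head := w.head
  normalized := by
    simp only [CoprodI.Word.relabel, List.mem_map]
    rintro _ _ ⟨l, hl, h⟩
    cases h
    exact (hd l.1).symm ▸ w.normalized _ _ hl

theorem prod_relabel {d : Transversal fun _ : ι => φ} {e : ι → ι} (he : Injective e)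
    (hd : ∀ i, d.set (e i) = d.set i) (w : NormalWord d) :
    (w.relabel he hd).prod = PushoutI.relabel e w.prod := by
  simp only [prod, map_mul, relabel_base, relabel_ofCoprodI_prod he]
  rfl

end NormalWord

theorem exists_transversal_const (hφ : Injective φ) :
    ∃ d : NormalWord.Transversal fun _ : ι => φ, ∀ i j, d.set i = d.set j := by
  obtain ⟨s, hs, h1s⟩ := φ.range.exists_isComplement_right 1
  exact ⟨⟨fun _ => hφ, fun _ => s, fun _ => h1s, fun _ => hs⟩, fun _ _ => rfl⟩

theorem relabel_apply_eq_self_iff (hφ : Injective φ) {e : ι → ι} (he : Injective e)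
    (hfix : ∀ i, e i ≠ i) {p : PushoutI fun _ : ι => φ} :
    relabel e p = p ↔ p ∈ (base _).range := by
  classical
  refine ⟨fun hp => ?_, by rintro ⟨h, rfl⟩; exact relabel_base e h⟩
  obtain ⟨d, hd⟩ := exists_transversal_const (ι := ι) hφ
  obtain ⟨w, rfl⟩ : ∃ w : NormalWord d, w.prod = p := NormalWord.equiv.symm.surjective p
  have hw : w.relabel he (fun i => hd _ _) = w :=
    NormalWord.prod_injective (by rwa [NormalWord.prod_relabel])
  have hempty : w.toWord = .empty :=
    CoprodI.Word.eq_empty_of_relabel_eq_self he hfix (congrArg NormalWord.toWord hw)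
  exact ⟨w.head, by simp [NormalWord.prod, hempty]⟩

end Monoid.PushoutI

open Monoid PushoutI

namespace IsAmalgamatedProduct

section UniversalProperty

variable {C A B G : Type*} [Group C] [Group A] [Group B] [Group G]
  {f : C →* A} {g : C →* B} {φ₁ : A →* G} {φ₂ : B →* G} {K : Type u} [Group K]

theorem hom_ext (h : IsAmalgamatedProduct.{u} f g φ₁ φ₂) {α β : G →* K}
    (h₁ : α.comp φ₁ = β.comp φ₁) (h₂ : α.comp φ₂ = β.comp φ₂) : α = β :=
  (h.lift_unique (β.comp φ₁) (β.comp φ₂) (by simp only [MonoidHom.comp_assoc, h.comm])).unique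
    ⟨h₁, h₂⟩ ⟨rfl, rfl⟩

noncomputable def lift (h : IsAmalgamatedProduct.{u} f g φ₁ φ₂) (ψ₁ : A →* K) (ψ₂ : B →* K)
    (hψ : ψ₁.comp f = ψ₂.comp g) : G →* K :=
  (h.lift_unique ψ₁ ψ₂ hψ).exists.choose

@[simp]
theorem lift_apply_left (h : IsAmalgamatedProduct.{u} f g φ₁ φ₂) (ψ₁ : A →* K) (ψ₂ : B →* K)
    (hψ : ψ₁.comp f = ψ₂.comp g) (a : A) : h.lift ψ₁ ψ₂ hψ (φ₁ a) = ψ₁ a :=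
  DFunLike.congr_fun (h.lift_unique ψ₁ ψ₂ hψ).exists.choose_spec.1 a

@[simp]
theorem lift_apply_right (h : IsAmalgamatedProduct.{u} f g φ₁ φ₂) (ψ₁ : A →* K) (ψ₂ : B →* K)
    (hψ : ψ₁.comp f = ψ₂.comp g) (b : B) : h.lift ψ₁ ψ₂ hψ (φ₂ b) = ψ₂ b :=
  DFunLike.congr_fun (h.lift_unique ψ₁ ψ₂ hψ).exists.choose_spec.2 b

end UniversalProperty

section Double

variable {C A G : Type u} [Group C] [Group A] [Group G] {f : C →* A} {φ₁ φ₂ : A →* G}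

noncomputable def mulEquivPushoutI (h : IsAmalgamatedProduct.{u} f f φ₁ φ₂) :
    G ≃* PushoutI fun _ : Bool => f :=
  MonoidHom.toMulEquiv
    (h.lift (of (φ := fun _ : Bool => f) true) (of (φ := fun _ : Bool => f) false)
      ((of_comp_eq_base true).trans (of_comp_eq_base false).symm))
    (PushoutI.lift (fun i => cond i φ₁ φ₂) (φ₁.comp f) fun i => by cases i <;> simp [h.comm])
    (h.hom_ext (by ext; simp) (by ext; simp))
    (PushoutI.hom_ext (fun i => by cases i <;> ext <;> simp)
      (by ext; simp [← of_apply_eq_base _ true]))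

@[simp]
theorem mulEquivPushoutI_apply_left (h : IsAmalgamatedProduct.{u} f f φ₁ φ₂) (a : A) :
    h.mulEquivPushoutI (φ₁ a) = of true a :=
  h.lift_apply_left ..

@[simp]
theorem mulEquivPushoutI_apply_right (h : IsAmalgamatedProduct.{u} f f φ₁ φ₂) (a : A) :
    h.mulEquivPushoutI (φ₂ a) = of false a :=
  h.lift_apply_right ..

theorem mulEquivPushoutI_mem_base_range_iff (h : IsAmalgamatedProduct.{u} f f φ₁ φ₂) {x : G} :
    h.mulEquivPushoutI x ∈ (base _).range ↔ x ∈ (φ₁.comp f).range := by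
  simp only [MonoidHom.mem_range, MonoidHom.comp_apply, ← of_apply_eq_base _ true,
    ← h.mulEquivPushoutI_apply_left, h.mulEquivPushoutI.injective.eq_iff]

end Double

end IsAmalgamatedProduct

theorem fixed_subgroup_of_exchange_involution_eq_amalgamated_subgroup_general
    {A G : Type u} [Group A] [Group G] (C : Subgroup A)
    (φ₁ φ₂ : A →* G)
    (hpush : IsAmalgamatedProduct.{u} C.subtype C.subtype φ₁ φ₂)
    (σ : G →* G) (hσ₁ : σ.comp φ₁ = φ₂) (hσ₂ : σ.comp φ₂ = φ₁) :
    ∀ x : G, σ x = x ↔ x ∈ φ₁ '' (C : Set A) := by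
  set e := hpush.mulEquivPushoutI
  have he : ∀ y, e (σ y) = relabel not (e y) := DFunLike.congr_fun <|
    show e.toMonoidHom.comp σ = (relabel not).comp e.toMonoidHom from
      hpush.hom_ext (by rw [MonoidHom.comp_assoc, hσ₁]; ext; simp [e])
        (by rw [MonoidHom.comp_assoc, hσ₂]; ext; simp [e])
  intro x
  calc σ x = x ↔ e (σ x) = e x := e.injective.eq_iff.symm
    _ ↔ relabel not (e x) = e x := by rw [he]
    _ ↔ e x ∈ (base _).range :=
        relabel_apply_eq_self_iff C.subtype_injective Bool.not_injective Bool.not_ne_self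
    _ ↔ x ∈ φ₁ '' (C : Set A) := by
        rw [hpush.mulEquivPushoutI_mem_base_range_iff]
        simp

/-- In the double `G = A *_C A` of a group `A` along a subgroup `C` (the amalgamated free
product of two copies of `A` along the inclusions of `C`, with its canonical injective
homomorphisms `φ₁, φ₂`), the fixed subgroup of the involution `σ` exchanging the two copies
of `A` (determined by `σ ∘ φ₁ = φ₂` and `σ ∘ φ₂ = φ₁`) is exactly the canonical image of
`C`. -/
theorem fixed_subgroup_of_exchange_involution_eq_amalgamated_subgroup
    {A G : Type u} [Group A] [Group G] (C : Subgroup A)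
    (φ₁ φ₂ : A →* G)
    (hφ₁ : Function.Injective φ₁) (hφ₂ : Function.Injective φ₂)
    (hpush : IsAmalgamatedProduct.{u} C.subtype C.subtype φ₁ φ₂)
    (σ : G →* G) (hσ₁ : σ.comp φ₁ = φ₂) (hσ₂ : σ.comp φ₂ = φ₁) :
    ∀ x : G, σ x = x ↔ x ∈ φ₁ '' (C : Set A) :=
  fixed_subgroup_of_exchange_involution_eq_amalgamated_subgroup_general C φ₁ φ₂ hpush σ hσ₁ hσ₂
end

section
/- Let A ≤ A' be groups, let C be a subgroup of A, and let f : C → B be an injective homomorphism into a group B. Then the homomorphism A *_C B → A' *_C B induced by the inclusion A ↪ A' and the identity map of B (both amalgams being taken along the inclusion of C and the map f) is injective. -/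
universe u

section Helpers

open Monoid

variable {C X Y : Type u} [Group C] [Group X] [Group Y]

/-- Family of two groups indexed by `Bool`. -/
abbrev twoFam (X Y : Type u) [Group X] [Group Y] : Bool → Type u
  | true => X
  | false => Y

instance twoFamGroup : ∀ b, Group (twoFam X Y b)
  | true => ‹Group X›
  | false => ‹Group Y›

/-- The two maps out of `C`. -/
abbrev twoφ (f : C →* X) (g : C →* Y) : ∀ b, C →* twoFam X Y b
  | true => f
  | false => g

/-- A cocone on the two groups. -/
abbrev twoψ {H : Type u} [Group H] (ψ₁ : X →* H) (ψ₂ : Y →* H) : ∀ b, twoFam X Y b →* H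
  | true => ψ₁
  | false => ψ₂

theorem twoφ_injective {f : C →* X} {g : C →* Y} (hf : Function.Injective f)
    (hg : Function.Injective g) : ∀ b, Function.Injective (twoφ f g b)
  | true => hf
  | false => hg

theorem pushoutI_isAmalgamatedProduct (f : C →* X) (g : C →* Y) :
    IsAmalgamatedProduct.{u} f g
      (PushoutI.of (φ := twoφ f g) true) (PushoutI.of (φ := twoφ f g) false) := by
  constructor
  · exact (PushoutI.of_comp_eq_base (φ := twoφ f g) true).trans
      (PushoutI.of_comp_eq_base (φ := twoφ f g) false).symm
  · intro H _ ψ₁ ψ₂ hcomm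
    have hfam : ∀ b, (twoψ ψ₁ ψ₂ b).comp (twoφ f g b) = ψ₁.comp f := by
      rintro (_|_); exact hcomm.symm; rfl
    refine ⟨PushoutI.lift (twoψ ψ₁ ψ₂) (ψ₁.comp f) hfam, ⟨?_, ?_⟩, ?_⟩
    · ext x; exact PushoutI.lift_of (twoψ ψ₁ ψ₂) (ψ₁.comp f) hfam (i := true) x
    · ext x; exact PushoutI.lift_of (twoψ ψ₁ ψ₂) (ψ₁.comp f) hfam (i := false) x
    · rintro k ⟨h1, h2⟩
      apply PushoutI.hom_ext
      · rintro (_|_)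
        · ext x
          rw [MonoidHom.comp_apply, MonoidHom.comp_apply, PushoutI.lift_of]
          exact DFunLike.congr_fun h2 x
        · ext x
          rw [MonoidHom.comp_apply, MonoidHom.comp_apply, PushoutI.lift_of]
          exact DFunLike.congr_fun h1 x
      · ext x
        rw [MonoidHom.comp_apply, MonoidHom.comp_apply, PushoutI.lift_base,
          ← PushoutI.of_apply_eq_base (φ := twoφ f g) true]
        exact DFunLike.congr_fun h1 (f x)

end Helpers


/-- If `A ≤ A'` are groups, `C` is a subgroup of `A` and `f : C → B` is an injective
homomorphism, then the homomorphism `A *_C B → A' *_C B` induced by the inclusion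
`A ↪ A'` and the identity of `B` is injective. -/
theorem amalgam_map_of_subgroup_injective
    {A' B : Type u} [Group A'] [Group B]
    (A C : Subgroup A') (hCA : C ≤ A)
    (f : ↥C →* B) (hf : Function.Injective f)
    {G₁ G₂ : Type u} [Group G₁] [Group G₂]
    (α : ↥A →* G₁) (β : B →* G₁)
    (hG₁ : IsAmalgamatedProduct.{u} (Subgroup.inclusion hCA) f α β)
    (α' : A' →* G₂) (β' : B →* G₂)
    (hG₂ : IsAmalgamatedProduct.{u} C.subtype f α' β')
    (h : G₁ →* G₂)
    (hhα : h.comp α = α'.comp A.subtype)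
    (hhβ : h.comp β = β') :
    Function.Injective h := by
  classical
  open Monoid in
  -- Step 1: α is injective
  have hα : Function.Injective α := by
    obtain ⟨e₁, ⟨he₁α, he₁β⟩, -⟩ :=
      hG₁.lift_unique (PushoutI.of (φ := twoφ (Subgroup.inclusion hCA) f) true)
        (PushoutI.of (φ := twoφ (Subgroup.inclusion hCA) f) false)
        (pushoutI_isAmalgamatedProduct (Subgroup.inclusion hCA) f).comm
    have : Function.Injective (e₁.comp α) := by
      rw [he₁α]
      exact PushoutI.of_injective
        (twoφ_injective (Subgroup.inclusion_injective hCA) hf) true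
    exact Function.Injective.of_comp (f := e₁) this
  -- Step 2: the pushout P of A.subtype : A →* A' and α : A →* G₁
  set φP := twoφ (A.subtype) α with hφP
  have hofP : Function.Injective (PushoutI.of (φ := φP) false) :=
    PushoutI.of_injective (twoφ_injective Subtype.coe_injective hα) false
  set ofA' : A' →* PushoutI φP := PushoutI.of (φ := φP) true with hofA'
  set ofG₁ : G₁ →* PushoutI φP := PushoutI.of (φ := φP) false with hofG₁
  have hbase : ofG₁.comp α = ofA'.comp A.subtype :=
    (PushoutI.of_comp_eq_base (φ := φP) false).trans
      (PushoutI.of_comp_eq_base (φ := φP) true).symm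
  -- Step 3: comm for (ofA', ofG₁ ∘ β) over C.subtype, f
  have hcomm : ofA'.comp C.subtype = (ofG₁.comp β).comp f := by
    rw [← Subgroup.subtype_comp_inclusion hCA, ← MonoidHom.comp_assoc, ← hbase,
      MonoidHom.comp_assoc, hG₁.comm, MonoidHom.comp_assoc]
  obtain ⟨e, ⟨heα', heβ'⟩, -⟩ := hG₂.lift_unique ofA' (ofG₁.comp β) hcomm
  -- Step 4: e ∘ h = ofG₁
  have key : e.comp h = ofG₁ := by
    obtain ⟨k, -, huniq⟩ := hG₁.lift_unique (ofG₁.comp α) (ofG₁.comp β)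
      (by rw [MonoidHom.comp_assoc, hG₁.comm, MonoidHom.comp_assoc])
    have h1 : (e.comp h) = k := huniq _ ⟨by
        rw [MonoidHom.comp_assoc, hhα, ← MonoidHom.comp_assoc, heα', ← hbase],
      by rw [MonoidHom.comp_assoc, hhβ, heβ']⟩
    have h2 : ofG₁ = k := huniq _ ⟨rfl, rfl⟩
    rw [h1, h2]
  have : Function.Injective (e.comp h) := key ▸ hofP
  exact Function.Injective.of_comp (f := e) this
end
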